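/- arXiv:math/0501026 — 7 statements merged into one kernel-verified Lean document; each statement's English description precedes it below -/
import Mathlib

section
/- If H is an n×n matrix with entries in {1,-1} satisfying H * Hᵀ = n • (identity matrix), and n ≥ 3, then 4 divides n. -/
theorem hadamard_order_div_four (n : ℕ) (H : Matrix (Fin n) (Fin n) ℤ)
    (hentries : ∀ i j, H i j = 1 ∨ H i j = -1)
    (hHad : H * H.transpose = (n : ℤ) • (1 : Matrix (Fin n) (Fin n) ℤ))
    (hn : 3 ≤ n) : 4 ∣ n := by
  have orth : ∀ i k : Fin n, i ≠ k → ∑ j, H i j * H k j = 0 := by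
    intro i k hik
    have := congrFun (congrFun hHad i) k
    simpa [Matrix.mul_apply, Matrix.one_apply, hik] using this
  set i0 : Fin n := ⟨0, by omega⟩
  set i1 : Fin n := ⟨1, by omega⟩
  set i2 : Fin n := ⟨2, by omega⟩
  have h01 : i1 ≠ i0 := by simp [i0, i1, Fin.ext_iff]
  have h02 : i2 ≠ i0 := by simp [i0, i2, Fin.ext_iff]
  have h12 : i1 ≠ i2 := by simp [i1, i2, Fin.ext_iff]
  have hsq : ∀ j, H i0 j * H i0 j = 1 := by
    intro j; rcases hentries i0 j with h | h <;> rw [h] <;> ring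
  have key : ∑ j, (1 + H i1 j * H i0 j) * (1 + H i2 j * H i0 j) = (n : ℤ) := by
    have expand : ∀ j : Fin n, (1 + H i1 j * H i0 j) * (1 + H i2 j * H i0 j)
        = 1 + H i1 j * H i0 j + H i2 j * H i0 j + H i1 j * H i2 j := by
      intro j
      rcases hentries i0 j with h0 | h0 <;> rw [h0] <;> ring
    rw [Finset.sum_congr rfl fun j _ => expand j]
    simp only [Finset.sum_add_distrib]
    rw [orth i1 i0 h01, orth i2 i0 h02, orth i1 i2 h12]
    simp
  have hdvd : (4 : ℤ) ∣ ∑ j, (1 + H i1 j * H i0 j) * (1 + H i2 j * H i0 j) := by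
    apply Finset.dvd_sum
    intro j _
    rcases hentries i1 j with h1 | h1 <;> rcases hentries i2 j with h2 | h2 <;>
      rcases hentries i0 j with h0 | h0 <;> rw [h1, h2, h0] <;> norm_num
  rw [key] at hdvd
  exact_mod_cast hdvd
end

section
/- Let H be a symmetric Bush-type Hadamard matrix of order 4n², viewed as a (2n)×(2n) array of 2n×2n blocks H_{ij}. Then the matrix A = (1/2)(J - H), where J is the all-ones matrix of order 4n², is a symmetric matrix with entries in {0,1}, has zero diagonal, and satisfies A² = n² • I + (n² - n) • J. -/
/-!
Write `J` for the all-ones matrix of order `N = 4n²`. The Bush conditions say that every row of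
`H` sums to `2n` (only the diagonal block contributes), and symmetry transfers this to the
columns, so `HJ = JH = 2n J`. Together with `H² = N I` and `J² = N J`, expanding
`A² = ¼ (J - H)²` gives `¼ (N I + (N - 4n) J) = n² I + (n² - n) J`.
-/

open Matrix

namespace Matrix

variable {m R : Type*} [Fintype m]

section CommSemiring

variable [CommSemiring R]

theorem mul_allOnes_of_rowSum_eq {H : Matrix m m R} {c : R} (hsum : ∀ x, ∑ y, H x y = c) :
    H * (of fun _ _ => 1 : Matrix m m R) = c • of fun _ _ => 1 := by
  ext x y
  simp [mul_apply, hsum]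

theorem allOnes_mul_of_isSymm_of_rowSum_eq {H : Matrix m m R} (hH : H.IsSymm) {c : R}
    (hsum : ∀ x, ∑ y, H x y = c) :
    (of fun _ _ => 1 : Matrix m m R) * H = c • of fun _ _ => 1 := by
  have h := congrArg transpose (mul_allOnes_of_rowSum_eq hsum)
  rwa [transpose_mul, hH.eq, transpose_smul] at h

theorem allOnes_mul_allOnes :
    (of fun _ _ => 1 : Matrix m m R) * of (fun _ _ => 1) =
      (Fintype.card m : R) • of fun _ _ => 1 := by
  ext x y
  simp [mul_apply]

end CommSemiring

theorem blockRowSum_eq_card {ι κ R : Type*} [Fintype ι] [DecidableEq ι] [Fintype κ]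
    [AddCommMonoidWithOne R] {H : Matrix (ι × κ) (ι × κ) R} (hdiag : ∀ i a b, H (i, a) (i, b) = 1)
    (hrow : ∀ i j, i ≠ j → ∀ a, ∑ b, H (i, a) (j, b) = 0) (x : ι × κ) :
    ∑ y, H x y = Fintype.card κ := by
  obtain ⟨i, a⟩ := x
  rw [Fintype.sum_prod_type, Finset.sum_eq_single i (fun j _ hj => hrow i j (Ne.symm hj) a)
    (by simp)]
  simp [hdiag]

theorem half_sub_mul_half_sub [Field R] [DecidableEq m] {J H : Matrix m m R} {N c : R}
    (hJJ : J * J = N • J) (hJH : J * H = c • J) (hHJ : H * J = c • J) (hHH : H * H = N • 1) :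
    ((1 / 2 : R) • (J - H)) * ((1 / 2 : R) • (J - H)) = (N / 4) • 1 + ((N - 2 * c) / 4) • J := by
  have expand : ((1 / 2 : R) • (J - H)) * ((1 / 2 : R) • (J - H)) =
      (1 / 4 : R) • (J * J - J * H - H * J + H * H) := by
    rw [smul_mul_smul_comm, sub_mul, mul_sub, mul_sub]
    congr 1
    · rw [div_mul_div_comm]
      norm_num
    · abel
  rw [expand, hJJ, hJH, hHJ, hHH]
  ext x y
  simp only [smul_apply, sub_apply, add_apply, smul_eq_mul]
  ring

end Matrix

theorem half_one_sub_eq_zero_or_one {K : Type*} [Field K] [NeZero (2 : K)] {h : K}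
    (hh : h = 1 ∨ h = -1) : (1 / 2 : K) * (1 - h) = 0 ∨ (1 / 2 : K) * (1 - h) = 1 := by
  rcases hh with rfl | rfl
  · simp
  · right
    rw [sub_neg_eq_add, one_add_one_eq_two, one_div_mul_cancel two_ne_zero]

theorem bush_to_adjacency_general (n : ℕ)
    (H : Matrix (Fin (2 * n) × Fin (2 * n)) (Fin (2 * n) × Fin (2 * n)) ℚ)
    (hentries : ∀ x y, H x y = 1 ∨ H x y = -1)
    (hHad : H * H.transpose =
      ((4 * n ^ 2 : ℕ) : ℚ) • (1 : Matrix (Fin (2 * n) × Fin (2 * n)) (Fin (2 * n) × Fin (2 * n)) ℚ))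
    (hsymm : H.transpose = H)
    (hdiag : ∀ i a b, H (i, a) (i, b) = 1)
    (hrow : ∀ i j, i ≠ j → ∀ a, ∑ b, H (i, a) (j, b) = 0) :
    let J : Matrix (Fin (2 * n) × Fin (2 * n)) (Fin (2 * n) × Fin (2 * n)) ℚ := fun _ _ => 1
    let A := (1 / 2 : ℚ) • (J - H)
    A.transpose = A ∧
    (∀ x y, A x y = 0 ∨ A x y = 1) ∧
    (∀ x, A x x = 0) ∧
    A * A = ((n ^ 2 : ℕ) : ℚ) • (1 : Matrix (Fin (2 * n) × Fin (2 * n)) (Fin (2 * n) × Fin (2 * n)) ℚ)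
      + ((n ^ 2 : ℚ) - (n : ℚ)) • J := by
  intro J A
  have hrowSum := blockRowSum_eq_card hdiag hrow
  have hHH : H * H = ((4 * n ^ 2 : ℕ) : ℚ) • 1 := by rwa [hsymm] at hHad
  have hcard : Fintype.card (Fin (2 * n) × Fin (2 * n)) = 4 * n ^ 2 := by
    simp only [Fintype.card_prod, Fintype.card_fin]
    ring
  have hJJ : J * J = ((4 * n ^ 2 : ℕ) : ℚ) • J := by
    rw [← hcard]
    exact allOnes_mul_allOnes
  refine ⟨?_, fun x y => half_one_sub_eq_zero_or_one (hentries x y), fun ⟨i, a⟩ => ?_, ?_⟩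
  · simp only [A, transpose_smul, transpose_sub, hsymm]
    rfl
  · show (1 / 2 : ℚ) * (1 - H (i, a) (i, a)) = 0
    rw [hdiag, sub_self, mul_zero]
  · rw [half_sub_mul_half_sub hJJ (allOnes_mul_of_isSymm_of_rowSum_eq hsymm hrowSum)
      (mul_allOnes_of_rowSum_eq hrowSum) hHH]
    simp only [Fintype.card_fin]
    push_cast
    congr 2 <;> ring

theorem bush_to_adjacency (n : ℕ)
    (H : Matrix (Fin (2 * n) × Fin (2 * n)) (Fin (2 * n) × Fin (2 * n)) ℚ)
    (hentries : ∀ x y, H x y = 1 ∨ H x y = -1)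
    (hHad : H * H.transpose =
      ((4 * n ^ 2 : ℕ) : ℚ) • (1 : Matrix (Fin (2 * n) × Fin (2 * n)) (Fin (2 * n) × Fin (2 * n)) ℚ))
    (hsymm : H.transpose = H)
    (hdiag : ∀ i a b, H (i, a) (i, b) = 1)
    (hrow : ∀ i j, i ≠ j → ∀ a, ∑ b, H (i, a) (j, b) = 0)
    (hcol : ∀ i j, i ≠ j → ∀ b, ∑ a, H (i, a) (j, b) = 0) :
    let J : Matrix (Fin (2 * n) × Fin (2 * n)) (Fin (2 * n) × Fin (2 * n)) ℚ := fun _ _ => 1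
    let A := (1 / 2 : ℚ) • (J - H)
    A.transpose = A ∧
    (∀ x y, A x y = 0 ∨ A x y = 1) ∧
    (∀ x, A x x = 0) ∧
    A * A = ((n ^ 2 : ℕ) : ℚ) • (1 : Matrix (Fin (2 * n) × Fin (2 * n)) (Fin (2 * n) × Fin (2 * n)) ℚ)
      + ((n ^ 2 : ℚ) - (n : ℚ)) • J :=
  bush_to_adjacency_general n H hentries hHad hsymm hdiag hrow
end

section
/- If H is a symmetric Bush-type Hadamard matrix of order 4n² with n ≥ 1, then the graph on {1,...,4n²} whose adjacency matrix is A = (1/2)(J - H) is a strongly regular graph with parameters v = 4n², k = 2n² - n, λ = μ = n² - n, and its vertex set can be partitioned into 2n pairwise disjoint cocliques (independent sets), each of size 2n. -/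
open Matrix Finset

theorem bush_gives_srg_with_coclique_partition (n : ℕ) (hn : 1 ≤ n)
    (H : Matrix (Fin (2 * n) × Fin (2 * n)) (Fin (2 * n) × Fin (2 * n)) ℚ)
    (hentries : ∀ x y, H x y = 1 ∨ H x y = -1)
    (hHad : H * H.transpose =
      ((4 * n ^ 2 : ℕ) : ℚ) • (1 : Matrix (Fin (2 * n) × Fin (2 * n)) (Fin (2 * n) × Fin (2 * n)) ℚ))
    (hsymm : H.transpose = H)
    (hdiag : ∀ i a b, H (i, a) (i, b) = 1)
    (hrow : ∀ i j, i ≠ j → ∀ a, ∑ b, H (i, a) (j, b) = 0)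
    (hcol : ∀ i j, i ≠ j → ∀ b, ∑ a, H (i, a) (j, b) = 0)
    (G : SimpleGraph (Fin (2 * n) × Fin (2 * n))) [DecidableRel G.Adj]
    (hAdj : ∀ x y, G.Adj x y ↔ x ≠ y ∧ H x y = -1) :
    G.IsSRGWith (4 * n ^ 2) (2 * n ^ 2 - n) (n ^ 2 - n) (n ^ 2 - n) ∧
    ∃ C : Fin (2 * n) → Finset (Fin (2 * n) × Fin (2 * n)),
      (∀ x, ∃! i, x ∈ C i) ∧
      (∀ i, (C i).card = 2 * n) ∧
      (∀ i, ∀ x ∈ C i, ∀ y ∈ C i, ¬ G.Adj x y) := by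
  classical
  have hdiag' : ∀ x, H x x = 1 := fun x => hdiag x.1 x.2 x.2
  have hrowsum : ∀ x, ∑ z, H x z = (2 * n : ℚ) := by
    rintro ⟨i, a⟩
    rw [Fintype.sum_prod_type]
    rw [Finset.sum_eq_single i]
    · simp [hdiag i a]
    · intro j _ hj
      exact hrow i j (Ne.symm hj) a
    · simp
  have horth : ∀ x y, x ≠ y → ∑ z, H x z * H y z = 0 := by
    intro x y hxy
    have h := congrFun (congrFun hHad x) y
    simp only [Matrix.mul_apply, Matrix.transpose_apply, Matrix.smul_apply,
      Matrix.one_apply, if_neg hxy, smul_zero] at h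
    calc ∑ z, H x z * H y z = ∑ z, H x z * H.transpose z y := by
          simp [hsymm]
      _ = 0 := h
  have hcardV : Fintype.card (Fin (2 * n) × Fin (2 * n)) = 4 * n ^ 2 := by
    simp [Fintype.card_prod]; ring
  have hcardU : (univ : Finset (Fin (2 * n) × Fin (2 * n))).card = 4 * n ^ 2 := by
    rw [Finset.card_univ, hcardV]
  have hnsq : n ≤ n ^ 2 := Nat.le_self_pow (by norm_num) n
  have hnsq2 : n ≤ 2 * n ^ 2 := le_trans hnsq (by omega)
  -- degree count
  have hdeg : ∀ x, (univ.filter (fun z => H x z = -1)).card = 2 * n ^ 2 - n := by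
    intro x
    have key : ((univ.filter (fun z => H x z = -1)).card : ℚ)
        = ∑ z, (1 - H x z) / 2 := by
      rw [Finset.card_filter]
      push_cast
      refine Finset.sum_congr rfl fun z _ => ?_
      rcases hentries x z with h | h <;> simp [h] <;> norm_num
    have key2 : ∑ z, (1 - H x z) / 2 = ((2 * n ^ 2 - n : ℕ) : ℚ) := by
      rw [← Finset.sum_div, Finset.sum_sub_distrib, Finset.sum_const, hrowsum x,
        hcardU, Nat.cast_sub hnsq2]
      push_cast
      ring
    exact_mod_cast key.trans key2
  -- common neighbor count
  have hcommon : ∀ x y, x ≠ y →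
      (univ.filter (fun z => H x z = -1 ∧ H y z = -1)).card = n ^ 2 - n := by
    intro x y hxy
    have key : ((univ.filter (fun z => H x z = -1 ∧ H y z = -1)).card : ℚ)
        = ∑ z, (1 - H x z - H y z + H x z * H y z) / 4 := by
      rw [Finset.card_filter]
      push_cast
      refine Finset.sum_congr rfl fun z _ => ?_
      rcases hentries x z with h1 | h1 <;> rcases hentries y z with h2 | h2 <;>
        simp [h1, h2] <;> norm_num
    have key2 : ∑ z, (1 - H x z - H y z + H x z * H y z) / 4 = ((n ^ 2 - n : ℕ) : ℚ) := by
      rw [← Finset.sum_div, Finset.sum_add_distrib, Finset.sum_sub_distrib,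
        Finset.sum_sub_distrib, Finset.sum_const, hrowsum x, hrowsum y, horth x y hxy,
        hcardU, Nat.cast_sub hnsq]
      push_cast
      ring
    exact_mod_cast key.trans key2
  have hcommonN : ∀ x y, x ≠ y → Fintype.card (G.commonNeighbors x y) = n ^ 2 - n := by
    intro x y hxy
    rw [← Set.toFinset_card]
    rw [← hcommon x y hxy]
    congr 1
    ext z
    simp only [Set.mem_toFinset, SimpleGraph.mem_commonNeighbors,
      Finset.mem_filter, Finset.mem_univ, true_and, hAdj]
    constructor
    · rintro ⟨⟨-, h1⟩, ⟨-, h2⟩⟩; exact ⟨h1, h2⟩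
    · rintro ⟨h1, h2⟩
      refine ⟨⟨?_, h1⟩, ⟨?_, h2⟩⟩
      · rintro rfl; rw [hdiag' x] at h1; norm_num at h1
      · rintro rfl; rw [hdiag' y] at h2; norm_num at h2
  refine ⟨⟨hcardV, ?_, ?_, ?_⟩, ?_⟩
  · -- regular
    intro x
    rw [SimpleGraph.degree, ← hdeg x]
    congr 1
    ext z
    simp only [SimpleGraph.mem_neighborFinset, Finset.mem_filter, Finset.mem_univ,
      true_and, hAdj]
    constructor
    · rintro ⟨-, h⟩; exact h
    · intro h
      refine ⟨?_, h⟩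
      rintro rfl; rw [hdiag' x] at h; norm_num at h
  · intro x y hxy
    exact hcommonN x y (G.ne_of_adj hxy)
  · intro x y hxy _
    exact hcommonN x y hxy
  · -- coclique partition
    refine ⟨fun i => univ.image (fun a => (i, a)), ?_, ?_, ?_⟩
    · rintro ⟨i, a⟩
      refine ⟨i, ?_, ?_⟩
      · exact Finset.mem_image.mpr ⟨a, Finset.mem_univ a, rfl⟩
      · intro j hj
        rcases Finset.mem_image.mp hj with ⟨b, -, hb⟩
        exact (Prod.mk.injEq _ _ _ _ ▸ hb).1.symm ▸ rfl
    · intro i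
      rw [Finset.card_image_of_injective _ (fun a b h => (Prod.mk.injEq _ _ _ _ ▸ h).2)]
      simp
    · intro i x hx y hy
      rcases Finset.mem_image.mp hx with ⟨a, -, ha⟩
      rcases Finset.mem_image.mp hy with ⟨b, -, hb⟩
      subst ha; subst hb
      rw [hAdj]
      rintro ⟨-, h⟩
      rw [hdiag i a b] at h
      norm_num at h
end

section
/- Let G be a strongly regular graph with parameters v = 4n², k = 2n² - n, λ = μ = n² - n whose vertex set is partitioned into 2n disjoint cocliques of size 2n. Then H = J - 2A (where A is the adjacency matrix and J the all-ones matrix), with rows and columns ordered so the cocliques form consecutive blocks, is a symmetric Bush-type Hadamard matrix of order 4n². -/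
/-!
Write `A` for the adjacency matrix and `J` for the all-ones matrix. Strong regularity gives
`A² = (k - μ) I + (λ - μ) A + μ J` and regularity gives `AJ = JA = kJ`, so
`(J - 2A)² = (v - 4k + 4μ) J + 4(k - μ) I + 4(λ - μ) A`, which is `4n² I` for the given parameters.

For the Bush property fix a coclique block `B` and let `d y` be the number of neighbours of `y`
in `B`. Double counting gives `∑ d = |B| k`, and the entries of `A²` on `B` give
`∑ d² = |B| k + |B| (|B| - 1) μ`. As `d` vanishes on `B`, the `4n² - 2n` vertices outside `B`
carry all of both sums, and there the mean of `d` is `n` and the mean of `d²` is `n²`: the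
variance of `d` is zero, so every vertex outside `B` has exactly `n` neighbours in `B`.
-/

open Matrix Finset

theorem Finset.eq_of_sum_eq_of_sum_sq_eq {ι R : Type*} [CommRing R] [LinearOrder R]
    [IsStrictOrderedRing R] {s : Finset ι} {f : ι → R} {c : R}
    (hsum : ∑ i ∈ s, f i = #s * c) (hsq : ∑ i ∈ s, f i ^ 2 = #s * c ^ 2) {i : ι} (hi : i ∈ s) :
    f i = c := by
  have hvar : ∑ i ∈ s, (f i - c) ^ 2 = 0 := by
    simp only [sub_sq, sum_add_distrib, sum_sub_distrib, ← sum_mul, ← mul_sum, hsum, hsq,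
      sum_const, nsmul_eq_mul]
    ring
  have := (sum_eq_zero_iff_of_nonneg fun j _ => sq_nonneg (f j - c)).1 hvar i hi
  exact sub_eq_zero.1 (pow_eq_zero_iff two_ne_zero |>.1 this)

namespace SimpleGraph

variable {V R : Type*} {G : SimpleGraph V} [DecidableRel G.Adj] {v k ℓ μ : ℕ}

theorem IsIndepSet.adjMatrix_apply_eq_zero [Zero R] [One R] {s : Set V} (hs : G.IsIndepSet s)
    {x y : V} (hx : x ∈ s) (hy : y ∈ s) : G.adjMatrix R x y = 0 := by
  rcases eq_or_ne x y with rfl | hxy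
  · simp
  · simp [hs hx hy hxy]

variable [Fintype V]

section Semiring

variable [NonAssocSemiring R]

theorem IsRegularOfDegree.sum_sum_adjMatrix (hG : G.IsRegularOfDegree k) (s : Finset V) :
    ∑ y, ∑ x ∈ s, G.adjMatrix R y x = #s * k := by
  refine sum_comm.trans ?_
  simp [adj_comm, ← neighborFinset_eq_filter, hG _]

theorem IsRegularOfDegree.adjMatrix_mul_of_one (hG : G.IsRegularOfDegree k) :
    G.adjMatrix R * of 1 = (k : R) • of 1 := by
  ext x y
  simp [hG x]

theorem IsRegularOfDegree.of_one_mul_adjMatrix (hG : G.IsRegularOfDegree k) :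
    of 1 * G.adjMatrix R = (k : R) • of 1 := by
  ext x y
  simp [hG y]

end Semiring

variable [DecidableEq V] [CommRing R]

omit [Fintype V] in
theorem adjMatrix_compl_eq : Gᶜ.adjMatrix R = of 1 - 1 - G.adjMatrix R := by
  ext x y
  rcases eq_or_ne x y with rfl | hxy
  · simp
  · by_cases hadj : G.Adj x y <;> simp [hxy, hadj, one_apply_ne]

theorem IsSRGWith.adjMatrix_sq_eq (h : G.IsSRGWith v k ℓ μ) :
    G.adjMatrix R ^ 2 = ((k : R) - μ) • 1 + ((ℓ : R) - μ) • G.adjMatrix R + (μ : R) • of 1 := by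
  rw [h.matrix_eq, adjMatrix_compl_eq]
  simp only [← Nat.cast_smul_eq_nsmul R]
  module

theorem IsSRGWith.of_one_sub_two_smul_adjMatrix_sq (h : G.IsSRGWith v k ℓ μ) :
    (of 1 - (2 : R) • G.adjMatrix R) ^ 2 =
      ((v : R) - 4 * k + 4 * μ) • of 1 + (4 * ((k : R) - μ) : R) • 1 +
        (4 * ((ℓ : R) - μ) : R) • G.adjMatrix R := by
  have hJJ : (of 1 : Matrix V V R) * of 1 = (v : R) • of 1 := by
    ext
    simp [mul_apply, h.card]
  rw [sq, sub_mul, mul_sub, mul_sub, Matrix.smul_mul, Matrix.mul_smul, Matrix.smul_mul,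
    Matrix.mul_smul, hJJ, h.regular.adjMatrix_mul_of_one, h.regular.of_one_mul_adjMatrix, ← sq,
    h.adjMatrix_sq_eq]
  module

theorem IsSRGWith.adjMatrix_sq_apply_of_isIndepSet (h : G.IsSRGWith v k ℓ μ) {s : Set V}
    (hs : G.IsIndepSet s) {x y : V} (hx : x ∈ s) (hy : y ∈ s) :
    (G.adjMatrix R ^ 2) x y = if x = y then (k : R) else μ := by
  rw [h.adjMatrix_sq_eq]
  rcases eq_or_ne x y with rfl | hxy
  · simp
  · simp [hxy, hs hx hy hxy]

theorem IsSRGWith.sum_sq_sum_adjMatrix_of_isIndepSet (h : G.IsSRGWith v k ℓ μ) {s : Finset V}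
    (hs : G.IsIndepSet (s : Set V)) :
    ∑ y, (∑ x ∈ s, G.adjMatrix R y x) ^ 2 = #s * k + #s * (#s - 1) * μ := by
  have hrow : ∀ x ∈ s, ∑ y ∈ s, (G.adjMatrix R ^ 2) x y = k + (#s - 1) * μ := by
    intro x hx
    rw [sum_congr rfl fun y hy => h.adjMatrix_sq_apply_of_isIndepSet hs hx hy,
      ← add_sum_erase s _ hx, if_pos rfl,
      sum_congr rfl fun y hy => if_neg (ne_of_mem_erase hy).symm, sum_const,
      card_erase_of_mem hx, nsmul_eq_mul, Nat.cast_sub (card_pos.2 ⟨x, hx⟩), Nat.cast_one]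
  calc ∑ y, (∑ x ∈ s, G.adjMatrix R y x) ^ 2
      = ∑ x ∈ s, ∑ y ∈ s, (G.adjMatrix R ^ 2) x y := by
        simp only [sq, sum_mul_sum, mul_apply]
        refine sum_comm.trans (sum_congr rfl fun x _ => sum_comm.trans (sum_congr rfl fun y _ => ?_))
        simp only [← G.isSymm_adjMatrix.apply x]
    _ = #s * k + #s * (#s - 1) * μ := by
        rw [sum_congr rfl hrow, sum_const, nsmul_eq_mul]
        ring

theorem IsSRGWith.sum_adjMatrix_eq_of_isIndepSet [LinearOrder R] [IsStrictOrderedRing R]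
    (h : G.IsSRGWith v k ℓ μ) {s : Finset V} (hs : G.IsIndepSet (s : Set V)) {c : R}
    (hmean : ((v : R) - #s) * c = #s * k)
    (hsq : ((v : R) - #s) * c ^ 2 = #s * k + #s * (#s - 1) * μ) {y : V} (hy : y ∉ s) :
    ∑ x ∈ s, G.adjMatrix R y x = c := by
  have hzero : ∀ y ∈ s, ∑ x ∈ s, G.adjMatrix R y x = 0 := fun y hy =>
    sum_eq_zero fun x hx => hs.adjMatrix_apply_eq_zero hy hx
  have hcard : (#sᶜ : R) = v - #s := by rw [card_compl, Nat.cast_sub (card_le_univ s), h.card]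
  refine eq_of_sum_eq_of_sum_sq_eq (s := sᶜ) (f := fun y => ∑ x ∈ s, G.adjMatrix R y x) ?_ ?_
    (mem_compl.2 hy)
  · rw [hcard, hmean, ← h.regular.sum_sum_adjMatrix s]
    exact sum_subset (subset_univ _) fun z _ hz => hzero z (notMem_compl.1 hz)
  · rw [hcard, hsq, ← h.sum_sq_sum_adjMatrix_of_isIndepSet hs]
    exact sum_subset (subset_univ _) fun z _ hz => by
      rw [hzero z (notMem_compl.1 hz), zero_pow two_ne_zero]

end SimpleGraph

open SimpleGraph

theorem Nat.cast_two_mul_sq_sub_self {R : Type*} [Ring R] (n : ℕ) :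
    ((2 * n ^ 2 - n : ℕ) : R) = 2 * n ^ 2 - n := by
  rw [Nat.cast_sub (show n ≤ 2 * n ^ 2 by nlinarith), Nat.cast_mul, Nat.cast_pow, Nat.cast_ofNat]

theorem Nat.cast_sq_sub_self {R : Type*} [Ring R] (n : ℕ) :
    ((n ^ 2 - n : ℕ) : R) = n ^ 2 - n := by
  rw [Nat.cast_sub (Nat.le_self_pow two_ne_zero n), Nat.cast_pow]

theorem sum_adjMatrix_apply_block_eq {R : Type*} [CommRing R] [LinearOrder R]
    [IsStrictOrderedRing R] {n ℓ : ℕ} {G : SimpleGraph (Fin (2 * n) × Fin (2 * n))}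
    [DecidableRel G.Adj] (hsrg : G.IsSRGWith (4 * n ^ 2) (2 * n ^ 2 - n) ℓ (n ^ 2 - n))
    (hcoclique : ∀ i a b, ¬ G.Adj (i, a) (i, b)) {i j : Fin (2 * n)} (hij : i ≠ j)
    (a : Fin (2 * n)) :
    ∑ b, G.adjMatrix R (i, a) (j, b) = n := by
  have hblock : G.IsIndepSet (({j} ×ˢ univ : Finset (Fin (2 * n) × Fin (2 * n))) : Set _) := by
    rintro ⟨j₁, b⟩ hb ⟨j₂, c⟩ hc -
    simp only [coe_product, coe_singleton, coe_univ, Set.mem_prod, Set.mem_singleton_iff] at hb hc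
    rw [hb.1, hc.1]
    exact hcoclique j b c
  have hcard : #({j} ×ˢ univ : Finset (Fin (2 * n) × Fin (2 * n))) = 2 * n := by simp
  have key := hsrg.sum_adjMatrix_eq_of_isIndepSet hblock (c := (n : R)) (y := (i, a))
    (by rw [hcard, Nat.cast_two_mul_sq_sub_self]; push_cast; ring)
    (by rw [hcard, Nat.cast_two_mul_sq_sub_self, Nat.cast_sq_sub_self]; push_cast; ring)
    (by simp [hij.symm])
  rwa [sum_product, sum_singleton] at key

theorem srg_with_coclique_partition_gives_bush (n : ℕ)
    (G : SimpleGraph (Fin (2 * n) × Fin (2 * n))) [DecidableRel G.Adj]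
    (hsrg : G.IsSRGWith (4 * n ^ 2) (2 * n ^ 2 - n) (n ^ 2 - n) (n ^ 2 - n))
    (hcoclique : ∀ i a b, ¬ G.Adj (i, a) (i, b)) :
    let J : Matrix (Fin (2 * n) × Fin (2 * n)) (Fin (2 * n) × Fin (2 * n)) ℚ := fun _ _ => 1
    let H := J - (2 : ℚ) • G.adjMatrix ℚ
    (∀ x y, H x y = 1 ∨ H x y = -1) ∧
    H.transpose = H ∧
    H * H.transpose =
      ((4 * n ^ 2 : ℕ) : ℚ) • (1 : Matrix (Fin (2 * n) × Fin (2 * n)) (Fin (2 * n) × Fin (2 * n)) ℚ) ∧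
    (∀ i a b, H (i, a) (i, b) = 1) ∧
    (∀ i j, i ≠ j → ∀ a, ∑ b, H (i, a) (j, b) = 0) ∧
    (∀ i j, i ≠ j → ∀ b, ∑ a, H (i, a) (j, b) = 0) := by
  intro J H
  have hH : ∀ x y, H x y = 1 - 2 * G.adjMatrix ℚ x y := fun _ _ => rfl
  have hsymm : H.transpose = H := by
    ext x y
    rw [transpose_apply, hH, hH, G.isSymm_adjMatrix.apply]
  have hrow : ∀ i j, i ≠ j → ∀ a, ∑ b, H (i, a) (j, b) = 0 := by
    intro i j hij a
    simp only [hH, sum_sub_distrib, ← mul_sum, sum_adjMatrix_apply_block_eq hsrg hcoclique hij a]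
    simp
  refine ⟨fun x y => ?_, hsymm, ?_, fun i a b => ?_, hrow, fun i j hij b => ?_⟩
  · by_cases hadj : G.Adj x y <;> norm_num [hH, hadj]
  · rw [hsymm, ← sq]
    refine hsrg.of_one_sub_two_smul_adjMatrix_sq.trans ?_
    rw [Nat.cast_two_mul_sq_sub_self, Nat.cast_sq_sub_self]
    push_cast
    module
  · simp [hH, hcoclique]
  · rw [← hrow j i hij.symm b]
    exact sum_congr rfl fun a _ => by rw [← transpose_apply H, hsymm]
end

section
/- Let G be a strongly regular graph with parameters v = 4n², k = 2n² - n, λ = μ = n² - n (so smallest eigenvalue -n), and let C be a coclique of size 2n in G. Then every vertex of G outside C is adjacent to exactly n vertices of C. -/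
theorem coclique_meets_hoffman_bound {V : Type*} [Fintype V] [DecidableEq V] (n : ℕ)
    (G : SimpleGraph V) [DecidableRel G.Adj]
    (hsrg : G.IsSRGWith (4 * n ^ 2) (2 * n ^ 2 - n) (n ^ 2 - n) (n ^ 2 - n))
    (C : Finset V) (hC : (C : Set V).Pairwise fun x y => ¬ G.Adj x y)
    (hCcard : C.card = 2 * n) :
    ∀ v : V, v ∉ C → (C.filter fun c => G.Adj v c).card = n := by
  set S : Finset V := Cᶜ with hS
  set d : V → ℕ := fun v => (C.filter fun c => G.Adj v c).card with hd
  have hdeq : ∀ v, d v = ∑ c ∈ C, if G.Adj v c then 1 else 0 := fun v =>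
    Finset.card_filter _ _
  -- neighbors of a vertex in C are all outside C
  have hnotC : ∀ c ∈ C, ∀ v, G.Adj v c → v ∈ S := by
    intro c hc v hadj
    rw [hS, Finset.mem_compl]
    intro hv
    exact hC hv hc (G.ne_of_adj hadj) hadj
  -- Lemma A
  have hA : ∀ c ∈ C, (S.filter fun v => G.Adj v c).card = 2 * n ^ 2 - n := by
    intro c hc
    have : (S.filter fun v => G.Adj v c) = G.neighborFinset c := by
      ext v
      rw [Finset.mem_filter, SimpleGraph.mem_neighborFinset]
      constructor
      · rintro ⟨-, h⟩; exact h.symm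
      · intro h; exact ⟨hnotC c hc v h.symm, h.symm⟩
    rw [this, SimpleGraph.card_neighborFinset_eq_degree, hsrg.regular c]
  -- Lemma B
  have hB : ∀ c ∈ C, ∀ c' ∈ C, c ≠ c' →
      (S.filter fun v => G.Adj v c ∧ G.Adj v c').card = n ^ 2 - n := by
    intro c hc c' hc' hne
    have hcn := hsrg.of_not_adj hne (hC hc hc' hne)
    have : (S.filter fun v => G.Adj v c ∧ G.Adj v c') = (G.commonNeighbors c c').toFinset := by
      ext v
      rw [Finset.mem_filter, Set.mem_toFinset, SimpleGraph.mem_commonNeighbors]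
      constructor
      · rintro ⟨-, h1, h2⟩; exact ⟨h1.symm, h2.symm⟩
      · rintro ⟨h1, h2⟩; exact ⟨hnotC c hc v h1.symm, h1.symm, h2.symm⟩
    rw [this, Set.toFinset_card, hcn]
  -- Step 1: sum of d over S
  have hsum1 : ∑ v ∈ S, d v = C.card * (2 * n ^ 2 - n) := by
    calc ∑ v ∈ S, d v = ∑ v ∈ S, ∑ c ∈ C, if G.Adj v c then 1 else 0 :=
          Finset.sum_congr rfl fun v _ => hdeq v
      _ = ∑ c ∈ C, ∑ v ∈ S, if G.Adj v c then 1 else 0 := Finset.sum_comm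
      _ = ∑ c ∈ C, (S.filter fun v => G.Adj v c).card :=
          Finset.sum_congr rfl fun c _ => (Finset.card_filter _ _).symm
      _ = ∑ c ∈ C, (2 * n ^ 2 - n) := Finset.sum_congr rfl hA
      _ = C.card * (2 * n ^ 2 - n) := by rw [Finset.sum_const, smul_eq_mul]
  -- Step 2: sum of squares
  have hsum2 : ∑ v ∈ S, (d v) ^ 2
      = C.card * ((2 * n ^ 2 - n) + (C.card - 1) * (n ^ 2 - n)) := by
    have hsq : ∀ v, (d v) ^ 2
        = ∑ c ∈ C, ∑ c' ∈ C, if G.Adj v c ∧ G.Adj v c' then 1 else 0 := by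
      intro v
      rw [hdeq v, sq, Finset.sum_mul_sum]
      refine Finset.sum_congr rfl fun c _ => Finset.sum_congr rfl fun c' _ => ?_
      split_ifs with h1 h2 h3 <;> simp_all
    calc ∑ v ∈ S, (d v) ^ 2
        = ∑ v ∈ S, ∑ c ∈ C, ∑ c' ∈ C, if G.Adj v c ∧ G.Adj v c' then 1 else 0 :=
          Finset.sum_congr rfl fun v _ => hsq v
      _ = ∑ c ∈ C, ∑ c' ∈ C, ∑ v ∈ S, if G.Adj v c ∧ G.Adj v c' then 1 else 0 := by
          rw [Finset.sum_comm]
          exact Finset.sum_congr rfl fun c _ => Finset.sum_comm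
      _ = ∑ c ∈ C, ∑ c' ∈ C, (S.filter fun v => G.Adj v c ∧ G.Adj v c').card :=
          Finset.sum_congr rfl fun c _ => Finset.sum_congr rfl fun c' _ =>
            (Finset.card_filter _ _).symm
      _ = ∑ c ∈ C, ((2 * n ^ 2 - n) + (C.card - 1) * (n ^ 2 - n)) := by
          refine Finset.sum_congr rfl fun c hc => ?_
          rw [← Finset.add_sum_erase _ _ hc]
          congr 1
          · have : (S.filter fun v => G.Adj v c ∧ G.Adj v c) = S.filter fun v => G.Adj v c := by
              ext v; rw [Finset.mem_filter, Finset.mem_filter, and_self]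
            rw [this, hA c hc]
          · rw [Finset.sum_congr rfl (fun c' hc' => hB c hc c' (Finset.mem_of_mem_erase hc')
              (Ne.symm (Finset.ne_of_mem_erase hc'))), Finset.sum_const, smul_eq_mul,
              Finset.card_erase_of_mem hc]
      _ = C.card * ((2 * n ^ 2 - n) + (C.card - 1) * (n ^ 2 - n)) := by
          rw [Finset.sum_const, smul_eq_mul]
  -- cardinality of S
  have hScard : S.card = 4 * n ^ 2 - 2 * n := by
    rw [hS, Finset.card_compl, hCcard, hsrg.card]
  -- inequalities for casting
  have h1 : n ≤ 2 * n ^ 2 := by nlinarith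
  have h2 : n ≤ n ^ 2 := Nat.le_self_pow two_ne_zero n
  have h3 : 2 * n ≤ 4 * n ^ 2 := by nlinarith
  -- variance is zero, over ℤ
  have hvar : ∑ v ∈ S, ((d v : ℤ) - n) ^ 2 = 0 := by
    have e1 : ∑ v ∈ S, ((d v : ℤ) - n) ^ 2
        = ∑ v ∈ S, ((d v : ℤ) ^ 2) - 2 * n * ∑ v ∈ S, (d v : ℤ) + n ^ 2 * S.card := by
      rw [Finset.sum_congr rfl (fun v _ => by ring :
        ∀ v ∈ S, ((d v : ℤ) - n) ^ 2 = (d v : ℤ) ^ 2 - 2 * n * (d v : ℤ) + n ^ 2)]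
      rw [Finset.sum_add_distrib, Finset.sum_sub_distrib, Finset.mul_sum, Finset.sum_const,
        nsmul_eq_mul]
      ring
    rw [e1]
    have c1 : ∑ v ∈ S, (d v : ℤ) = (C.card : ℤ) * (2 * (n : ℤ) ^ 2 - n) := by
      rw [← Nat.cast_sum, hsum1]
      push_cast [Nat.cast_sub h1]
      ring
    have c2 : ∑ v ∈ S, ((d v : ℤ) ^ 2)
        = (C.card : ℤ) * ((2 * (n:ℤ) ^ 2 - n) + ((C.card : ℤ) - 1) * ((n:ℤ) ^ 2 - n)) := by
      have hc2 : ∑ v ∈ S, ((d v : ℤ) ^ 2) = ((∑ v ∈ S, (d v) ^ 2 : ℕ) : ℤ) := by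
        push_cast; ring
      rcases Nat.eq_zero_or_pos n with hn | hn
      · subst hn
        have hCe : C = ∅ := Finset.card_eq_zero.mp (by simpa using hCcard)
        subst hCe
        simp [hd]
      · have hcc : 1 ≤ C.card := by rw [hCcard]; omega
        rw [hc2, hsum2]
        push_cast [Nat.cast_sub h1, Nat.cast_sub h2, Nat.cast_sub hcc]
        ring
    rw [c1, c2, hScard, hCcard]
    push_cast [Nat.cast_sub h3]
    ring
  intro v hv
  have hvS : v ∈ S := by rw [hS, Finset.mem_compl]; exact hv
  have hz := (Finset.sum_eq_zero_iff_of_nonneg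
    (fun v _ => sq_nonneg ((d v : ℤ) - n))).mp hvar v hvS
  have : (d v : ℤ) = n := by
    have := sq_eq_zero_iff.mp hz
    linarith
  exact_mod_cast this
end

section
/- Let K = {g₀ = 1, g₁, g₂, g₃} be a Klein four group, W a group of order n², and D = ∪_{ℓ=0}^{3} ({g_ℓ} × D_ℓ) a reversible Hadamard difference set with parameters (4n², 2n² - n, n² - n) in G = K × W, where D_ℓ ⊆ W. If there is a subgroup P ≤ W of order n and indices i ≠ j with P ∩ D_i = P ∩ D_j = ∅, then H := ({g₀} × P) ∪ ({g_i g_j} × P) is a subgroup of G of order 2n disjoint from the reversible difference set (g_i, 1)·D. -/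
theorem klein_times_W_hds_disjoint_subgroup
    {K W : Type*} [Group K] [Fintype K] [DecidableEq K]
    [Group W] [Fintype W] [DecidableEq W]
    (hK4 : Fintype.card K = 4) (hK2 : ∀ x : K, x ^ 2 = 1)
    (g : Fin 4 → K) (hg : Function.Bijective g) (hg0 : g 0 = 1)
    (n : ℕ) (hW : Fintype.card W = n ^ 2)
    (Dl : Fin 4 → Finset W)
    (D : Finset (K × W))
    (hD : D = Finset.univ.biUnion fun ℓ : Fin 4 => {g ℓ} ×ˢ Dl ℓ)
    (hk : D.card = 2 * n ^ 2 - n)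
    (hdiff : ∀ x : K × W, x ≠ 1 →
      ((D ×ˢ D).filter fun p => p.1 ≠ p.2 ∧ p.1 * p.2⁻¹ = x).card = n ^ 2 - n)
    (hrev : ∀ d : K × W, d ∈ D → d⁻¹ ∈ D)
    (P : Subgroup W) (hP : Nat.card P = n)
    (i j : Fin 4) (hij : i ≠ j)
    (hPi : ∀ w ∈ P, w ∉ Dl i) (hPj : ∀ w ∈ P, w ∉ Dl j) :
    ∃ H : Subgroup (K × W),
      (H : Set (K × W)) =
        ({g 0} : Set K) ×ˢ (P : Set W) ∪ ({g i * g j} : Set K) ×ˢ (P : Set W) ∧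
      Nat.card H = 2 * n ∧
      ∀ x ∈ H, x ∉ D.image fun d => (g i, (1 : W)) * d := by
  set t : K := g i * g j with ht
  have hsq : ∀ x : K, x * x = 1 := by
    intro x; have := hK2 x; rwa [pow_two] at this
  have hinv : ∀ x : K, x⁻¹ = x := by
    intro x; rw [inv_eq_iff_mul_eq_one, hsq]
  have ht1 : t ≠ 1 := by
    intro h
    apply hij
    apply hg.injective
    have : g i = (g j)⁻¹ := eq_inv_of_mul_eq_one_left h
    rw [this, hinv]
  -- the subgroup {1, t} of K
  have hmemS : ∀ a b : K, a ∈ ({1, t} : Set K) → b ∈ ({1, t} : Set K) →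
      a * b ∈ ({1, t} : Set K) := by
    rintro a b (rfl | rfl) (rfl | rfl) <;> simp [hsq]
  let S : Subgroup K :=
    { carrier := {1, t}
      one_mem' := Or.inl rfl
      mul_mem' := fun {a b} ha hb => hmemS a b ha hb
      inv_mem' := by rintro a (rfl | rfl) <;> simp [hinv] }
  refine ⟨S.prod P, ?_, ?_, ?_⟩
  · rw [Subgroup.coe_prod]
    have hS : (S : Set K) = {1, t} := rfl
    rw [hS, hg0]
    ext ⟨a, w⟩
    simp only [Set.mem_prod, Set.mem_insert_iff, Set.mem_singleton_iff, Set.mem_union]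
    tauto
  · have h2 : Nat.card S = 2 := by
      have h := Nat.card_coe_set_eq ({1, t} : Set K)
      rw [Set.ncard_pair (Ne.symm ht1)] at h
      exact h
    rw [Nat.card_eq_of_bijective _ (Subgroup.prodEquiv S P).bijective, Nat.card_prod, h2, hP]
  · rintro ⟨a, w⟩ hx hmem
    simp only [Finset.mem_image] at hmem
    obtain ⟨d, hd, hde⟩ := hmem
    rw [hD] at hd
    simp only [Finset.mem_biUnion, Finset.mem_univ, true_and, Finset.mem_product,
      Finset.mem_singleton] at hd
    obtain ⟨ℓ, hℓ1, hℓ2⟩ := hd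
    rw [Prod.ext_iff] at hde
    obtain ⟨he1, he2⟩ := hde
    have h1 : a = g i * d.1 := he1.symm
    have h2 : w = d.2 := by
      have := he2.symm
      simpa using this
    have hwP : w ∈ P := (Subgroup.mem_prod.mp hx).2
    have haS : a ∈ ({1, t} : Set K) := (Subgroup.mem_prod.mp hx).1
    rcases haS with ha | ha
    · -- a = 1 : g i * g ℓ = 1 → ℓ = i
      have : g ℓ = g i := by
        have : g i * d.1 = 1 := by rw [← h1, ha]
        rw [hℓ1] at this
        have h3 : g i = (g ℓ)⁻¹ := eq_inv_of_mul_eq_one_left this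
        rw [hinv] at h3
        exact h3.symm
      have hli : ℓ = i := hg.injective this
      exact hPi w hwP (by rw [h2]; rw [hli] at hℓ2; exact hℓ2)
    · -- a = t : g i * g ℓ = g i * g j → ℓ = j
      have : g ℓ = g j := by
        have : g i * d.1 = g i * g j := by rw [← h1, ha]
        rw [hℓ1] at this
        exact mul_left_cancel this
      have hlj : ℓ = j := hg.injective this
      exact hPj w hwP (by rw [h2]; rw [hlj] at hℓ2; exact hℓ2)
end

section
/- Let E₁ = ∪(g_i, A_i) be a reversible Hadamard difference set in K×W₁ with |A₀|=|A₁|=|A₂|=(w₁²-w₁)/2 and |A₃|=(w₁²+w₁)/2, and let E₂ = ∪(g_i, B_i) be a reversible Hadamard difference set in K×W₂ with |B₀|=(w₂²+w₂)/2 and |B₁|=|B₂|=|B₃|=(w₂²-w₂)/2, as in the hypotheses of Turyn's composition theorem. Then the set ∇(A₀,A₁;B₀,B₁) has cardinality (w₁²w₂² + w₁w₂)/2, and each of ∇(A₀,A₁;B₂,B₃), ∇(A₂,A₃;B₀,B₁), ∇(A₂,A₃;B₂,B₃) has cardinality (w₁²w₂² - w₁w₂)/2. -/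
set_option maxHeartbeats 1000000

def nabla {W₁ W₂ : Type*} [Fintype W₁] [Fintype W₂] [DecidableEq W₁] [DecidableEq W₂]
    (A B : Finset W₁) (C D : Finset W₂) : Finset (W₁ × W₂) :=
  (A ∩ B) ×ˢ Cᶜ ∪ (Aᶜ ∩ Bᶜ) ×ˢ C ∪ (A ∩ Bᶜ) ×ˢ Dᶜ ∪ (Aᶜ ∩ B) ×ˢ D

lemma nabla_card {W₁ W₂ : Type*} [Fintype W₁] [Fintype W₂] [DecidableEq W₁] [DecidableEq W₂]
    (A B : Finset W₁) (C D : Finset W₂) :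
    (nabla A B C D).card = (A ∩ B).card * Cᶜ.card + (Aᶜ ∩ Bᶜ).card * C.card
      + (A ∩ Bᶜ).card * Dᶜ.card + (Aᶜ ∩ B).card * D.card := by
  have d12 : Disjoint ((A ∩ B) ×ˢ Cᶜ) ((Aᶜ ∩ Bᶜ) ×ˢ C) := by
    simp only [Finset.disjoint_left, Finset.mem_product, Finset.mem_inter, Finset.mem_compl]
    tauto
  have d123 : Disjoint ((A ∩ B) ×ˢ Cᶜ ∪ (Aᶜ ∩ Bᶜ) ×ˢ C) ((A ∩ Bᶜ) ×ˢ Dᶜ) := by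
    simp only [Finset.disjoint_left, Finset.mem_union, Finset.mem_product, Finset.mem_inter,
      Finset.mem_compl]
    tauto
  have d1234 : Disjoint ((A ∩ B) ×ˢ Cᶜ ∪ (Aᶜ ∩ Bᶜ) ×ˢ C ∪ (A ∩ Bᶜ) ×ˢ Dᶜ) ((Aᶜ ∩ B) ×ˢ D) := by
    simp only [Finset.disjoint_left, Finset.mem_union, Finset.mem_product, Finset.mem_inter,
      Finset.mem_compl]
    tauto
  rw [nabla, Finset.card_union_of_disjoint d1234, Finset.card_union_of_disjoint d123,
    Finset.card_union_of_disjoint d12]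
  simp [Finset.card_product, add_assoc]

lemma nabla_card_int {W₁ W₂ : Type*} [Fintype W₁] [Fintype W₂] [DecidableEq W₁] [DecidableEq W₂]
    (A B : Finset W₁) (C D : Finset W₂) :
    (4 * (nabla A B C D).card : ℤ)
      = 2 * A.card * (2 * Fintype.card W₂)
        + 2 * C.card * (2 * Fintype.card W₁ - 2 * A.card - 2 * B.card)
        + 2 * D.card * (2 * B.card - 2 * A.card) := by
  have H1 : ((A ∩ B).card : ℤ) + (A ∩ Bᶜ).card = A.card := by
    have := Finset.card_inter_add_card_sdiff A B
    rw [sdiff_eq, Finset.inf_eq_inter] at this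
    exact_mod_cast this
  have H2 : ((A ∩ B).card : ℤ) + (Aᶜ ∩ B).card = B.card := by
    have := Finset.card_inter_add_card_sdiff B A
    rw [sdiff_eq, Finset.inf_eq_inter, Finset.inter_comm B A, Finset.inter_comm B Aᶜ] at this
    exact_mod_cast this
  have H3 : ((A ∩ B).card : ℤ) + (A ∩ Bᶜ).card + ((Aᶜ ∩ B).card + (Aᶜ ∩ Bᶜ).card)
      = Fintype.card W₁ := by
    have h1 := Finset.card_inter_add_card_sdiff Aᶜ B
    rw [sdiff_eq, Finset.inf_eq_inter] at h1
    have h2 := Finset.card_compl_add_card A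
    have h1' : ((Aᶜ ∩ B).card : ℤ) + (Aᶜ ∩ Bᶜ).card = Aᶜ.card := by exact_mod_cast h1
    have h2' : ((Aᶜ.card : ℤ)) + A.card = Fintype.card W₁ := by exact_mod_cast h2
    linarith
  have H4 : ((Cᶜ.card : ℤ)) + C.card = Fintype.card W₂ := by
    exact_mod_cast Finset.card_compl_add_card C
  have H5 : ((Dᶜ.card : ℤ)) + D.card = Fintype.card W₂ := by
    exact_mod_cast Finset.card_compl_add_card D
  have hc' : ((nabla A B C D).card : ℤ) = (A ∩ B).card * Cᶜ.card + (Aᶜ ∩ Bᶜ).card * C.card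
      + (A ∩ Bᶜ).card * Dᶜ.card + (Aᶜ ∩ B).card * D.card := by
    exact_mod_cast nabla_card A B C D
  rw [hc']
  linear_combination (4 * (Fintype.card W₂ : ℤ) - 4 * C.card - 4 * D.card) * H1
    + (4 * (D.card : ℤ) - 4 * C.card) * H2 + 4 * (C.card : ℤ) * H3
    + 4 * ((A ∩ B).card : ℤ) * H4 + 4 * ((A ∩ Bᶜ).card : ℤ) * H5

theorem turyn_nabla_cards
    {K W₁ W₂ : Type*} [Group K] [Fintype K] [DecidableEq K]
    [Group W₁] [Fintype W₁] [DecidableEq W₁]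
    [Group W₂] [Fintype W₂] [DecidableEq W₂]
    (hK4 : Fintype.card K = 4) (hK2 : ∀ x : K, x ^ 2 = 1)
    (g : Fin 4 → K) (hg : Function.Bijective g) (hg0 : g 0 = 1)
    (w₁ w₂ : ℕ) (hw₁ : Odd w₁) (hw₂ : Odd w₂)
    (hW₁ : Fintype.card W₁ = w₁ ^ 2) (hW₂ : Fintype.card W₂ = w₂ ^ 2)
    (A : Fin 4 → Finset W₁) (B : Fin 4 → Finset W₂)
    (E₁ : Finset (K × W₁)) (E₂ : Finset (K × W₂))
    (hE₁ : E₁ = Finset.univ.biUnion fun i : Fin 4 => {g i} ×ˢ A i)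
    (hE₂ : E₂ = Finset.univ.biUnion fun i : Fin 4 => {g i} ×ˢ B i)
    (hE₁card : E₁.card = 2 * w₁ ^ 2 - w₁)
    (hE₂card : E₂.card = 2 * w₂ ^ 2 - w₂)
    (hE₁diff : ∀ x : K × W₁, x ≠ 1 →
      ((E₁ ×ˢ E₁).filter fun p => p.1 ≠ p.2 ∧ p.1 * p.2⁻¹ = x).card = w₁ ^ 2 - w₁)
    (hE₂diff : ∀ x : K × W₂, x ≠ 1 →
      ((E₂ ×ˢ E₂).filter fun p => p.1 ≠ p.2 ∧ p.1 * p.2⁻¹ = x).card = w₂ ^ 2 - w₂)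
    (hE₁rev : ∀ d ∈ E₁, d⁻¹ ∈ E₁) (hE₂rev : ∀ d ∈ E₂, d⁻¹ ∈ E₂)
    (hA012 : ∀ i : Fin 4, i ≠ 3 → 2 * (A i).card = w₁ ^ 2 - w₁)
    (hA3 : 2 * (A 3).card = w₁ ^ 2 + w₁)
    (hB0 : 2 * (B 0).card = w₂ ^ 2 + w₂)
    (hB123 : ∀ i : Fin 4, i ≠ 0 → 2 * (B i).card = w₂ ^ 2 - w₂) :
    2 * (nabla (A 0) (A 1) (B 0) (B 1)).card = w₁ ^ 2 * w₂ ^ 2 + w₁ * w₂ ∧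
    2 * (nabla (A 0) (A 1) (B 2) (B 3)).card = w₁ ^ 2 * w₂ ^ 2 - w₁ * w₂ ∧
    2 * (nabla (A 2) (A 3) (B 0) (B 1)).card = w₁ ^ 2 * w₂ ^ 2 - w₁ * w₂ ∧
    2 * (nabla (A 2) (A 3) (B 2) (B 3)).card = w₁ ^ 2 * w₂ ^ 2 - w₁ * w₂ := by
  have hp₁ : 1 ≤ w₁ := hw₁.pos
  have hp₂ : 1 ≤ w₂ := hw₂.pos
  have hle₁ : w₁ ≤ w₁ ^ 2 := by nlinarith
  have hle₂ : w₂ ≤ w₂ ^ 2 := by nlinarith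
  have hle : w₁ * w₂ ≤ w₁ ^ 2 * w₂ ^ 2 := Nat.mul_le_mul hle₁ hle₂
  have ha0 : (2 * ((A 0).card : ℤ)) = (w₁ : ℤ) ^ 2 - w₁ := by
    have := hA012 0 (by decide); zify [hle₁] at this; linarith
  have ha1 : (2 * ((A 1).card : ℤ)) = (w₁ : ℤ) ^ 2 - w₁ := by
    have := hA012 1 (by decide); zify [hle₁] at this; linarith
  have ha2 : (2 * ((A 2).card : ℤ)) = (w₁ : ℤ) ^ 2 - w₁ := by
    have := hA012 2 (by decide); zify [hle₁] at this; linarith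
  have ha3 : (2 * ((A 3).card : ℤ)) = (w₁ : ℤ) ^ 2 + w₁ := by
    zify at hA3; linarith
  have hb0 : (2 * ((B 0).card : ℤ)) = (w₂ : ℤ) ^ 2 + w₂ := by
    zify at hB0; linarith
  have hb1 : (2 * ((B 1).card : ℤ)) = (w₂ : ℤ) ^ 2 - w₂ := by
    have := hB123 1 (by decide); zify [hle₂] at this; linarith
  have hb2 : (2 * ((B 2).card : ℤ)) = (w₂ : ℤ) ^ 2 - w₂ := by
    have := hB123 2 (by decide); zify [hle₂] at this; linarith
  have hb3 : (2 * ((B 3).card : ℤ)) = (w₂ : ℤ) ^ 2 - w₂ := by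
    have := hB123 3 (by decide); zify [hle₂] at this; linarith
  have hW₁' : ((Fintype.card W₁ : ℤ)) = (w₁ : ℤ) ^ 2 := by exact_mod_cast hW₁
  have hW₂' : ((Fintype.card W₂ : ℤ)) = (w₂ : ℤ) ^ 2 := by exact_mod_cast hW₂
  clear hE₁diff hE₂diff hE₁ hE₂ hE₁card hE₂card hE₁rev hE₂rev hK2 hg hg0 hK4
  refine ⟨?_, ?_, ?_, ?_⟩
  · have k := nabla_card_int (A 0) (A 1) (B 0) (B 1)
    rw [hW₁', hW₂', ha0, ha1, hb0, hb1] at k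
    zify; linarith [k]
  · have k := nabla_card_int (A 0) (A 1) (B 2) (B 3)
    rw [hW₁', hW₂', ha0, ha1, hb2, hb3] at k
    zify [hle]; linarith [k]
  · have k := nabla_card_int (A 2) (A 3) (B 0) (B 1)
    rw [hW₁', hW₂', ha2, ha3, hb0, hb1] at k
    zify [hle]; linarith [k]
  · have k := nabla_card_int (A 2) (A 3) (B 2) (B 3)
    rw [hW₁', hW₂', ha2, ha3, hb2, hb3] at k
    zify [hle]; linarith [k]
end
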